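/- Let 𝔾 = (I,Δ) be a discrete quantum semigroup with a right invariant mean 𝔪, and let f ∈ F(𝔾) be such that g := Δ(f) − f⊗1 belongs to F_{b:1}(𝔾×𝔾) (here (f⊗1)(β,γ) = f(β)⊗1_{n(γ)}). Then F := (𝔪 ⊗̃ id)(g) ∈ F(𝔾) satisfies the noncommutative additive equation: [Δ(F)](β,γ) = F(β)⊗1_{n(γ)} + 1_{n(β)}⊗F(γ) for all β,γ ∈ I. -/

import Mathlib

open scoped Matrix.Norms.L2Operator Kronecker ComplexOrder

namespace DQSG

/-- The matrix algebra `M_k(ℂ)`. -/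
abbrev Mat (k : ℕ) : Type := Matrix (Fin k) (Fin k) ℂ

/-- `M_k(ℂ) ⊗ M_l(ℂ)`, realized as matrices indexed by `Fin k × Fin l`. -/
abbrev Mat2 (k l : ℕ) : Type := Matrix (Fin k × Fin l) (Fin k × Fin l) ℂ

/-- `M_k(ℂ) ⊗ M_l(ℂ) ⊗ M_p(ℂ)`. -/
abbrev Mat3 (k l p : ℕ) : Type :=
  Matrix (Fin k × Fin l × Fin p) (Fin k × Fin l × Fin p) ℂ

/-- The function algebra `F(I)` of an index system `(I, n)`. -/
abbrev FI {I : Type*} (n : I → ℕ) : Type _ := ∀ γ : I, Mat (n γ)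

/-- The function algebra `F(I × J)`. -/
abbrev FI2 {I J : Type*} (n : I → ℕ) (m : J → ℕ) : Type _ :=
  ∀ (α : I) (β : J), Mat2 (n α) (m β)

/-- The function algebra `F(I × J × K)`. -/
abbrev FI3 {I J K : Type*} (n : I → ℕ) (m : J → ℕ) (p : K → ℕ) : Type _ :=
  ∀ (α : I) (β : J) (γ : K), Mat3 (n α) (m β) (p γ)

/-- The subspace `F_b(I)` of bounded functions in `F(I)` (w.r.t. the operator norm). -/
noncomputable def Fb {I : Type*} (n : I → ℕ) : Submodule ℂ (FI n) where
  carrier := {f | ∃ C : ℝ, ∀ γ, ‖f γ‖ ≤ C}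
  zero_mem' := ⟨0, fun γ => by simp⟩
  add_mem' := by
    rintro f g ⟨C, hC⟩ ⟨D, hD⟩
    exact ⟨C + D, fun γ => (norm_add_le _ _).trans (add_le_add (hC γ) (hD γ))⟩
  smul_mem' := by
    rintro c f ⟨C, hC⟩
    exact ⟨‖c‖ * C, fun γ => by
      rw [Pi.smul_apply, norm_smul]
      exact mul_le_mul_of_nonneg_left (hC γ) (norm_nonneg c)⟩

/-- `F_{b:1}(I × J)`: functions bounded in the first variable, for each fixed
second variable. -/
def Fb1 {I J : Type*} {n : I → ℕ} {m : J → ℕ} (f : FI2 n m) : Prop :=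
  ∀ β : J, ∃ C : ℝ, ∀ α : I, ‖f α β‖ ≤ C

/-- `F_{b:2}(I × J)`: functions bounded in the second variable, for each fixed
first variable. -/
def Fb2 {I J : Type*} {n : I → ℕ} {m : J → ℕ} (f : FI2 n m) : Prop :=
  ∀ α : I, ∃ C : ℝ, ∀ β : J, ‖f α β‖ ≤ C

/-- The slice `f_β^{ij} ∈ F(I)` of `f ∈ F(I × J)`,
so that `f(α,β) = Σ_{i,j} f_β^{ij}(α) ⊗ e_β^{ij}`. -/
def slice2 {I J : Type*} {n : I → ℕ} {m : J → ℕ} (f : FI2 n m) (β : J)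
    (i j : Fin (m β)) : FI n :=
  fun α => Matrix.of fun k l => f α β (k, i) (l, j)

/-- The slice `f_β^{ij} ∈ F(I)` of `f ∈ F(J × I)`,
so that `f(β,α) = Σ_{i,j} e_β^{ij} ⊗ f_β^{ij}(α)`. -/
def slice1 {I J : Type*} {n : I → ℕ} {m : J → ℕ} (f : FI2 m n) (β : J)
    (i j : Fin (m β)) : FI n :=
  fun α => Matrix.of fun k l => f β α (i, k) (j, l)

/-- `T ⊗̃ id : F(I × J) → F(I' × J)` for a map `T : F(I) → F(I')`. -/
def tenR {I I' J : Type*} {n : I → ℕ} {n' : I' → ℕ} {m : J → ℕ}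
    (T : FI n → FI n') (f : FI2 n m) : FI2 n' m :=
  fun α' β => Matrix.of fun u v => T (slice2 f β u.2 v.2) α' u.1 v.1

/-- `id ⊗̃ T : F(J × I) → F(J × I')` for a map `T : F(I) → F(I')`. -/
def tenL {I I' J : Type*} {n : I → ℕ} {n' : I' → ℕ} {m : J → ℕ}
    (T : FI n → FI n') (f : FI2 m n) : FI2 m n' :=
  fun β α' => Matrix.of fun u v => T (slice1 f β u.1 v.1) α' u.2 v.2

/-- `T ⊗̃ id : F(I × J) → F(I₁ × I₂ × J)` for a map `T : F(I) → F(I₁ × I₂)`. -/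
def tenR2 {I I₁ I₂ J : Type*} {n : I → ℕ} {n₁ : I₁ → ℕ} {n₂ : I₂ → ℕ} {m : J → ℕ}
    (T : FI n → FI2 n₁ n₂) (f : FI2 n m) : FI3 n₁ n₂ m :=
  fun β₁ β₂ γ => Matrix.of fun u v =>
    T (slice2 f γ u.2.2 v.2.2) β₁ β₂ (u.1, u.2.1) (v.1, v.2.1)

/-- `id ⊗̃ T : F(J × I) → F(J × I₁ × I₂)` for a map `T : F(I) → F(I₁ × I₂)`. -/
def tenL2 {I I₁ I₂ J : Type*} {n : I → ℕ} {n₁ : I₁ → ℕ} {n₂ : I₂ → ℕ} {m : J → ℕ}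
    (T : FI n → FI2 n₁ n₂) (f : FI2 m n) : FI3 m n₁ n₂ :=
  fun γ β₁ β₂ => Matrix.of fun u v =>
    T (slice1 f γ u.1 v.1) β₁ β₂ u.2 v.2

open scoped Classical in
/-- Apply a functional defined on `F_b(I)` to an arbitrary element of `F(I)`,
extended by `0` off `F_b(I)`. -/
noncomputable def apF {I : Type*} {n : I → ℕ} (𝔪 : Fb n →ₗ[ℂ] ℂ) (g : FI n) : ℂ :=
  if h : g ∈ Fb n then 𝔪 ⟨g, h⟩ else 0

/-- `𝔪 ⊗̃ id : F(I × J) → F(J)` for a functional `𝔪` on `F_b(I)`. -/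
noncomputable def fTenR {I J : Type*} {n : I → ℕ} {m : J → ℕ}
    (𝔪 : Fb n →ₗ[ℂ] ℂ) (f : FI2 n m) : FI m :=
  fun β => Matrix.of fun i j => apF 𝔪 (slice2 f β i j)

/-- `id ⊗̃ 𝔪 : F(J × I) → F(J)` for a functional `𝔪` on `F_b(I)`. -/
noncomputable def fTenL {I J : Type*} {n : I → ℕ} {m : J → ℕ}
    (𝔪 : Fb n →ₗ[ℂ] ℂ) (f : FI2 m n) : FI m :=
  fun β => Matrix.of fun i j => apF 𝔪 (slice1 f β i j)

/-- `𝔪 ⊗̃ id ⊗̃ id : F(I × J × K) → F(J × K)` for a functional `𝔪` on `F_b(I)`. -/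
noncomputable def fTenR3 {I J K : Type*} {n : I → ℕ} {m : J → ℕ} {p : K → ℕ}
    (𝔪 : Fb n →ₗ[ℂ] ℂ) (f : FI3 n m p) : FI2 m p :=
  fun β γ => Matrix.of fun u v =>
    apF 𝔪 (fun α => Matrix.of fun k l => f α β γ (k, u) (l, v))

/-- A state on the C*-algebra `F_b(I)`: a positive linear functional with `𝔪(1) = 1`. -/
def IsState {I : Type*} {n : I → ℕ} (𝔪 : Fb n →ₗ[ℂ] ℂ) : Prop :=
  (∀ g : FI n, g ∈ Fb n → 0 ≤ apF 𝔪 (star g * g)) ∧ apF 𝔪 1 = 1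

/-- A comultiplication on the index system `(I, n)`, i.e. the structure of a
discrete quantum semigroup. `D α β γ` is the *-homomorphism
`Δ^α_{β,γ} : M_{n(α)} → M_{n(β)} ⊗ M_{n(γ)}`. -/
structure Comul {I : Type*} (n : I → ℕ) where
  /-- the family of *-homomorphisms `Δ^α_{β,γ}` -/
  D : ∀ α β γ : I, Mat (n α) → Mat2 (n β) (n γ)
  linear : ∀ α β γ, IsLinearMap ℂ (D α β γ)
  map_mul' : ∀ α β γ x y, D α β γ (x * y) = D α β γ x * D α β γ y
  map_star' : ∀ α β γ x, D α β γ (star x) = star (D α β γ x)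
  /-- condition (i): `Δ^α_{β,γ}(1) Δ^{α'}_{β,γ}(1) = 0` for `α ≠ α'` -/
  orth : ∀ β γ α α' : I, α ≠ α' → D α β γ 1 * D α' β γ 1 = 0
  /-- for fixed `β, γ` only finitely many `Δ^α_{β,γ}` are nonzero
  (a consequence of condition (i), included as data) -/
  finite : ∀ β γ : I, {α : I | D α β γ ≠ 0}.Finite
  /-- condition (ii): coassociativity
  `Σ_ω (Δ^ω_{α,β} ⊗ id) ∘ Δ^λ_{ω,γ} = Σ_ω (id ⊗ Δ^ω_{β,γ}) ∘ Δ^λ_{α,ω}`,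
  written entrywise. -/
  coassoc : ∀ (lam α β γ : I) (x : Mat (n lam)) (p p' : Fin (n α))
      (q q' : Fin (n β)) (r r' : Fin (n γ)),
      ∑ᶠ ω : I, D ω α β (Matrix.of fun k l => D lam ω γ x (k, r) (l, r')) (p, q) (p', q')
        = ∑ᶠ ω : I, D ω β γ (Matrix.of fun k l => D lam α ω x (p, k) (p', l)) (q, r) (q', r')

/-- The induced *-homomorphism `Δ : F(I) → F(I × I)`,
`[Δ(f)](β,γ) = Σ_α Δ^α_{β,γ}(f(α))`. -/
noncomputable def Comul.ind {I : Type*} {n : I → ℕ} (C : Comul n) (f : FI n) :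
    FI2 n n :=
  fun β γ => ∑ᶠ α : I, C.D α β γ (f α)

/-- A right invariant mean for a discrete quantum semigroup: a state `𝔪` on
`F_b(𝔾)` with `(𝔪 ⊗̃ id)(Δ f) = 𝔪(f)·1` for all `f ∈ F_b(𝔾)`. -/
def IsRIMean {I : Type*} {n : I → ℕ} (C : Comul n) (𝔪 : Fb n →ₗ[ℂ] ℂ) : Prop :=
  IsState 𝔪 ∧ ∀ f : FI n, f ∈ Fb n →
    fTenR 𝔪 (C.ind f) = fun γ => apF 𝔪 f • (1 : Mat (n γ))

/-- A left invariant mean for a discrete quantum semigroup: a state `𝔪` on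
`F_b(𝔾)` with `(id ⊗̃ 𝔪)(Δ f) = 𝔪(f)·1` for all `f ∈ F_b(𝔾)`. -/
def IsLIMean {I : Type*} {n : I → ℕ} (C : Comul n) (𝔪 : Fb n →ₗ[ℂ] ℂ) : Prop :=
  IsState 𝔪 ∧ ∀ f : FI n, f ∈ Fb n →
    fTenL 𝔪 (C.ind f) = fun γ => apF 𝔪 f • (1 : Mat (n γ))

/-- A *-homomorphism between function algebras: a linear, multiplicative,
star-preserving map. -/
def IsStarHom {I J : Type*} {n : I → ℕ} {m : J → ℕ} (T : FI n → FI m) : Prop :=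
  IsLinearMap ℂ T ∧ (∀ f g, T (f * g) = T f * T g) ∧ ∀ f, T (star f) = star (T f)

open scoped Classical in
/-- Apply a map defined on `F_b(I)` to an arbitrary element of `F(I)`,
extended by `0` off `F_b(I)`. -/
noncomputable def apTb {I J : Type*} {n : I → ℕ} {m : J → ℕ}
    (T : Fb n → FI m) (g : FI n) : FI m :=
  if h : g ∈ Fb n then T ⟨g, h⟩ else 0

/-- `T ⊗̃ id : F_{b:1}(I × J) → F(I' × J)` for a map `T` defined on `F_b(I)`. -/
noncomputable def tenRb {I I' J : Type*} {n : I → ℕ} {n' : I' → ℕ} {m : J → ℕ}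
    (T : Fb n → FI n') (f : FI2 n m) : FI2 n' m :=
  fun α' β => Matrix.of fun u v => apTb T (slice2 f β u.2 v.2) α' u.1 v.1

open scoped Classical in
/-- The canonical embedding `I_α : M_{n(α)} → F(I)` as functions supported at `α`:
`emb α x` is the element of `F(I)` that is `x` at `α` and `0` elsewhere. -/
noncomputable def emb {I : Type*} {n : I → ℕ} (α : I) (x : Mat (n α)) : FI n :=
  Function.update (0 : FI n) α x

/-- The canonical identification `ℂ = M_1(ℂ) → M_1(ℂ) ⊗ M_1(ℂ)` (the identity map). -/
def e11 : Mat 1 → Mat2 1 1 := fun x => Matrix.of fun u v => x u.1 v.1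

/-- The C*-algebra `ℓ∞(G)` of bounded complex-valued functions on `G`,
as a subspace of all complex-valued functions. -/
noncomputable def Fbc (G : Type*) : Submodule ℂ (G → ℂ) where
  carrier := {f | ∃ C : ℝ, ∀ x, ‖f x‖ ≤ C}
  zero_mem' := ⟨0, fun x => by simp⟩
  add_mem' := by
    rintro f g ⟨C, hC⟩ ⟨D, hD⟩
    exact ⟨C + D, fun x => (norm_add_le _ _).trans (add_le_add (hC x) (hD x))⟩
  smul_mem' := by
    rintro c f ⟨C, hC⟩
    exact ⟨‖c‖ * C, fun x => by
      rw [Pi.smul_apply, norm_smul]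
      exact mul_le_mul_of_nonneg_left (hC x) (norm_nonneg c)⟩

open scoped Classical in
/-- Apply a functional defined on `ℓ∞(G)` to an arbitrary function,
extended by `0` off `ℓ∞(G)`. -/
noncomputable def apC {G : Type*} (m : Fbc G →ₗ[ℂ] ℂ) (g : G → ℂ) : ℂ :=
  if h : g ∈ Fbc G then m ⟨g, h⟩ else 0

/-- A state on the C*-algebra `ℓ∞(G)`: a positive linear functional
taking the value `1` at the constant function `1`. -/
def IsCState {G : Type*} (m : Fbc G →ₗ[ℂ] ℂ) : Prop :=
  (∀ g : G → ℂ, g ∈ Fbc G → 0 ≤ apC m (star g * g)) ∧ apC m 1 = 1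

/-!
Write `Δ` for the induced comultiplication. Applying `Δ` to `F = (𝔪 ⊗̃ id)(g)` amounts to applying
`𝔪` to the first leg of `(id ⊗̃ Δ)(g)`. Coassociativity turns `(id ⊗̃ Δ)(Δ f)` into
`(Δ ⊗̃ id)(Δ f)`, and since `Δ f = g + f ⊗ 1` this gives
`(id ⊗̃ Δ)(g) = (Δ ⊗̃ id)(g) + g ⊗ 1 + f ⊗ (1 ⊗ 1 - Δ 1)`.
Every term but the last is bounded in the first variable (`Δ` is contractive because the
`Δ^α_{β,γ}` have orthogonal ranges), so when `f` is unbounded the coefficient `1 ⊗ 1 - Δ 1`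
vanishes entrywise, and right invariance evaluates the other two terms to `1 ⊗ F(γ)` and
`F(β) ⊗ 1`. When `f` is bounded, right invariance gives `F = 𝔪(f) 1 - 𝔪(f) 1 = 0` directly.
-/

open scoped Matrix

theorem _root_.Matrix.l2_opNorm_one_submatrix_le {m m' : Type*} [Fintype m] [Fintype m']
    [DecidableEq m] [DecidableEq m'] {e : m' → m} (he : Function.Injective e) :
    ‖(1 : Matrix m m ℂ).submatrix e id‖ ≤ 1 := by
  set P := (1 : Matrix m m ℂ).submatrix e id
  have hPP : P * Pᴴ = 1 := by
    rw [Matrix.conjTranspose_submatrix, Matrix.conjTranspose_one,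
      ← Matrix.submatrix_mul _ _ _ _ _ Function.bijective_id, Matrix.one_mul,
      Matrix.submatrix_one _ he]
  have hsq : ‖P‖ * ‖P‖ ≤ 1 := by
    rw [← Matrix.l2_opNorm_conjTranspose P, ← Matrix.l2_opNorm_conjTranspose_mul_self,
      Matrix.conjTranspose_conjTranspose, hPP, ← Matrix.diagonal_one,
      Matrix.l2_opNorm_diagonal]
    exact pi_norm_le_iff_of_nonneg zero_le_one |>.2 fun _ => by simp
  nlinarith [norm_nonneg P]

theorem _root_.Matrix.l2_opNorm_submatrix_le {m n m' n' : Type*} [Fintype m] [Fintype n]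
    [Fintype m'] [Fintype n'] [DecidableEq m] [DecidableEq n] [DecidableEq m'] [DecidableEq n']
    (A : Matrix m n ℂ) {e : m' → m} {e' : n' → n} (he : Function.Injective e)
    (he' : Function.Injective e') : ‖A.submatrix e e'‖ ≤ ‖A‖ := by
  have hA : A.submatrix e e' =
      (1 : Matrix m m ℂ).submatrix e id * A * ((1 : Matrix n n ℂ).submatrix e' id)ᴴ := by
    ext i j
    simp [Matrix.mul_apply, Matrix.one_apply]
  calc ‖A.submatrix e e'‖
      ≤ ‖(1 : Matrix m m ℂ).submatrix e id‖ * ‖A‖ * ‖((1 : Matrix n n ℂ).submatrix e' id)ᴴ‖ := by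
        rw [hA]
        exact (Matrix.l2_opNorm_mul _ _).trans
          (mul_le_mul_of_nonneg_right (Matrix.l2_opNorm_mul _ _) (norm_nonneg _))
    _ ≤ 1 * ‖A‖ * 1 := by
        rw [Matrix.l2_opNorm_conjTranspose]
        gcongr
        · exact Matrix.l2_opNorm_one_submatrix_le he
        · exact Matrix.l2_opNorm_one_submatrix_le he'
    _ = ‖A‖ := by ring

theorem _root_.CStarAlgebra.norm_add_eq_max_of_orthogonal {A : Type*} [NonUnitalCStarAlgebra A]
    {a b : A} (h₁ : star a * b = 0) (h₂ : a * star b = 0) :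
    ‖a + b‖ = max ‖a‖ ‖b‖ := by
  have h₁' : star b * a = 0 := by simpa using congrArg star h₁
  have hab : (star a * a) * (star b * b) = 0 := by
    rw [mul_assoc, ← mul_assoc a, h₂, zero_mul, mul_zero]
  have hsq : ‖a + b‖ * ‖a + b‖ = max ‖a‖ ‖b‖ * max ‖a‖ ‖b‖ := by
    rw [← CStarRing.norm_star_mul_self, star_add, add_mul, mul_add, mul_add, h₁, h₁', zero_add,
      add_zero, (IsSelfAdjoint.star_mul_self a).norm_add_eq_max
        (IsSelfAdjoint.star_mul_self b) hab, CStarRing.norm_star_mul_self,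
      CStarRing.norm_star_mul_self]
    rcases le_total ‖a‖ ‖b‖ with h | h
    · rw [max_eq_right h, max_eq_right (mul_self_le_mul_self (norm_nonneg a) h)]
    · rw [max_eq_left h, max_eq_left (mul_self_le_mul_self (norm_nonneg b) h)]
  exact (mul_self_inj (norm_nonneg _) (le_max_of_le_left (norm_nonneg a))).1 hsq

theorem _root_.CStarAlgebra.norm_sum_le_of_orthogonal {A ι : Type*} [NonUnitalCStarAlgebra A]
    {x : ι → A} {s : Finset ι} {K : ℝ} (hK : 0 ≤ K) (hx : ∀ i ∈ s, ‖x i‖ ≤ K)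
    (horth : ∀ i ∈ s, ∀ j ∈ s, i ≠ j → star (x i) * x j = 0 ∧ x i * star (x j) = 0) :
    ‖∑ i ∈ s, x i‖ ≤ K := by
  classical
  induction s using Finset.induction_on with
  | empty => simpa using hK
  | insert i s hi ih =>
    have hne : ∀ j ∈ s, i ≠ j := fun j hj h => hi (h ▸ hj)
    rw [Finset.sum_insert hi, CStarAlgebra.norm_add_eq_max_of_orthogonal]
    · exact max_le (hx i (s.mem_insert_self i))
        (ih (fun j hj => hx j (Finset.mem_insert_of_mem hj))
          fun j hj k hk => horth j (Finset.mem_insert_of_mem hj) k (Finset.mem_insert_of_mem hk))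
    · rw [Finset.mul_sum]
      exact Finset.sum_eq_zero fun j hj =>
        (horth i (s.mem_insert_self i) j (Finset.mem_insert_of_mem hj) (hne j hj)).1
    · rw [star_sum, Finset.mul_sum]
      exact Finset.sum_eq_zero fun j hj =>
        (horth i (s.mem_insert_self i) j (Finset.mem_insert_of_mem hj) (hne j hj)).2

theorem _root_.Finset.sum_sum_eq_finsum_finsum {α β M : Type*} [AddCommMonoid M]
    {X : α → β → M} (s : Finset α) (t : α → Finset β) (h : ∀ a b, X a b ≠ 0 → a ∈ s ∧ b ∈ t a) :
    ∑ a ∈ s, ∑ b ∈ t a, X a b = ∑ᶠ b, ∑ᶠ a, X a b := by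
  rw [Finset.sum_congr rfl fun a _ =>
    (finsum_eq_sum_of_support_subset (X a) fun b hb => (h a b hb).2).symm, sum_finsum_comm]
  · exact finsum_congr fun b => (finsum_eq_sum_of_support_subset _ fun a ha => (h a b ha).1).symm
  · exact fun a _ => (t a).finite_toSet.subset fun b hb => (h a b hb).2

theorem _root_.Matrix.map_eq_sum_single {k V F : Type*} [Fintype k] [DecidableEq k]
    [AddCommMonoid V] [Module ℂ V] [FunLike F (Matrix k k ℂ) V] [LinearMapClass F ℂ _ V]
    (L : F) (x : Matrix k k ℂ) :
    L x = ∑ i, ∑ j, x i j • L (Matrix.single i j 1) := by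
  conv_lhs => rw [Matrix.matrix_eq_sum_single x]
  simp only [map_sum, ← map_smul, Matrix.smul_single, smul_eq_mul, mul_one]

section Slices

variable {I J : Type*} {n : I → ℕ} {m : J → ℕ}

theorem norm_slice2_le (f : FI2 n m) (β : J) (i j : Fin (m β)) (α : I) :
    ‖slice2 f β i j α‖ ≤ ‖f α β‖ :=
  Matrix.l2_opNorm_submatrix_le (f α β) (e := fun k => (k, i)) (e' := fun l => (l, j))
    (fun _ _ h => congrArg Prod.fst h) (fun _ _ h => congrArg Prod.fst h)

theorem slice2_mem_Fb {f : FI2 n m} (hf : Fb1 f) (β : J) (i j : Fin (m β)) :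
    slice2 f β i j ∈ Fb n := by
  obtain ⟨K, hK⟩ := hf β
  exact ⟨K, fun α => (norm_slice2_le f β i j α).trans (hK α)⟩

end Slices

section Functional

variable {I : Type*} {n : I → ℕ} (𝔪 : Fb n →ₗ[ℂ] ℂ)

theorem apF_of_mem {a : FI n} (ha : a ∈ Fb n) : apF 𝔪 a = 𝔪 ⟨a, ha⟩ := dif_pos ha

theorem apF_add {a b : FI n} (ha : a ∈ Fb n) (hb : b ∈ Fb n) :
    apF 𝔪 (a + b) = apF 𝔪 a + apF 𝔪 b := by
  rw [apF_of_mem 𝔪 ha, apF_of_mem 𝔪 hb, apF_of_mem 𝔪 (add_mem ha hb), ← map_add]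
  rfl

theorem apF_smul (c : ℂ) {a : FI n} (ha : a ∈ Fb n) : apF 𝔪 (c • a) = c * apF 𝔪 a := by
  rw [apF_of_mem 𝔪 ha, apF_of_mem 𝔪 (Submodule.smul_mem _ c ha), ← smul_eq_mul, ← map_smul]
  rfl

theorem apF_sum {ι : Type*} {s : Finset ι} {p : ι → FI n} (hp : ∀ i ∈ s, p i ∈ Fb n) :
    apF 𝔪 (∑ i ∈ s, p i) = ∑ i ∈ s, apF 𝔪 (p i) := by
  classical
  induction s using Finset.induction_on with
  | empty => simpa using apF_smul 𝔪 0 (zero_mem (Fb n))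
  | insert i s hi ih =>
    rw [Finset.forall_mem_insert] at hp
    rw [Finset.sum_insert hi, Finset.sum_insert hi, apF_add 𝔪 hp.1 (sum_mem hp.2), ih hp.2]

end Functional

def slice3 {I J K : Type*} {n : I → ℕ} {m : J → ℕ} {p : K → ℕ} (h : FI3 n m p) (β : J) (γ : K)
    (u v : Fin (m β) × Fin (p γ)) : FI n :=
  fun α => Matrix.of fun k l => h α β γ (k, u) (l, v)

namespace Comul

variable {I : Type*} {n : I → ℕ} (C : Comul n)

def toHom (α β γ : I) : Mat (n α) →⋆ₙₐ[ℂ] Mat2 (n β) (n γ) where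
  toFun := C.D α β γ
  map_add' := (C.linear α β γ).map_add
  map_smul' := (C.linear α β γ).map_smul
  map_zero' := (C.linear α β γ).map_zero
  map_mul' := C.map_mul' α β γ
  map_star' := C.map_star' α β γ

@[simp]
theorem toHom_apply (α β γ : I) (x : Mat (n α)) : C.toHom α β γ x = C.D α β γ x := rfl

noncomputable def supp (β γ : I) : Finset I := (C.finite β γ).toFinset

theorem mem_supp {α β γ : I} : α ∈ C.supp β γ ↔ C.D α β γ ≠ 0 := by
  simp [supp]

theorem D_eq_zero_of_notMem_supp {α β γ : I} (h : α ∉ C.supp β γ) (x : Mat (n α)) :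
    C.D α β γ x = 0 := by
  rw [C.mem_supp, not_not] at h
  rw [h, Pi.zero_apply]

theorem D_mul_D_eq_zero {α α' β γ : I} (hne : α ≠ α') (x : Mat (n α)) (y : Mat (n α')) :
    C.D α β γ x * C.D α' β γ y = 0 := by
  rw [← mul_one x, ← one_mul y, C.map_mul', C.map_mul', mul_assoc, ← mul_assoc (C.D α β γ 1),
    C.orth β γ α α' hne, zero_mul, mul_zero]

theorem ind_eq_sum (h : FI n) (β γ : I) :
    C.ind h β γ = ∑ α ∈ C.supp β γ, C.toHom α β γ (h α) :=
  finsum_eq_sum_of_support_subset _ fun α hα =>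
    C.mem_supp.2 fun hD => hα (by simp [hD])

theorem norm_ind_le {h : FI n} {K : ℝ} (hK : 0 ≤ K) (hh : ∀ α, ‖h α‖ ≤ K) (β γ : I) :
    ‖C.ind h β γ‖ ≤ K := by
  rw [C.ind_eq_sum]
  refine CStarAlgebra.norm_sum_le_of_orthogonal hK
    (fun α _ => (NonUnitalStarAlgHom.norm_apply_le _ _).trans (hh α)) fun α _ α' _ hne => ?_
  simp only [toHom_apply, ← C.map_star']
  exact ⟨C.D_mul_D_eq_zero hne _ _, C.D_mul_D_eq_zero hne _ _⟩

theorem fb1_ind {h : FI n} (hh : h ∈ Fb n) : Fb1 (C.ind h) := by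
  obtain ⟨K, hK⟩ := hh
  exact fun γ => ⟨max K 0, fun α =>
    C.norm_ind_le (le_max_right K 0) (fun ω => (hK ω).trans (le_max_left K 0)) α γ⟩

noncomputable def indₗ : FI n →ₗ[ℂ] FI2 n n where
  toFun := C.ind
  map_add' a b := by
    ext β γ : 2
    simp only [ind_eq_sum, Pi.add_apply, map_add, Finset.sum_add_distrib]
  map_smul' c a := by
    ext β γ : 2
    simp only [ind_eq_sum, Pi.smul_apply, map_smul, Finset.smul_sum, RingHom.id_apply]

theorem ind_zero : C.ind 0 = 0 := C.indₗ.map_zero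

theorem ind_add (a b : FI n) : C.ind (a + b) = C.ind a + C.ind b := C.indₗ.map_add a b

theorem ind_sub (a b : FI n) : C.ind (a - b) = C.ind a - C.ind b := C.indₗ.map_sub a b

theorem ind_smul (c : ℂ) (a : FI n) : C.ind (c • a) = c • C.ind a := C.indₗ.map_smul c a

theorem ind_sum_apply {t : I → Finset I} {M : ∀ ω : I, I → Mat (n ω)}
    (hM : ∀ ω lam, lam ∉ t ω → M ω lam = 0) (β γ : I) (u v : Fin (n β) × Fin (n γ)) :
    C.ind (fun ω => ∑ lam ∈ t ω, M ω lam) β γ u v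
      = ∑ᶠ lam, ∑ᶠ ω, C.D ω β γ (M ω lam) u v := by
  simp only [C.ind_eq_sum, map_sum, Matrix.sum_apply, toHom_apply]
  refine Finset.sum_sum_eq_finsum_finsum _ _ fun ω lam hX => ⟨?_, ?_⟩ <;> by_contra h
  · exact hX (by rw [C.D_eq_zero_of_notMem_supp h, Matrix.zero_apply])
  · exact hX (by rw [hM ω lam h, ← toHom_apply, map_zero, Matrix.zero_apply])

theorem slice2_ind (f : FI n) (γ : I) (r r' : Fin (n γ)) :
    slice2 (C.ind f) γ r r'
      = fun ω => ∑ lam ∈ C.supp ω γ, Matrix.of fun a b => C.D lam ω γ (f lam) (a, r) (b, r') := by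
  ext ω a b
  simp [slice2, C.ind_eq_sum, Matrix.sum_apply]

theorem slice1_ind (f : FI n) (α : I) (k l : Fin (n α)) :
    slice1 (C.ind f) α k l
      = fun ω => ∑ lam ∈ C.supp α ω, Matrix.of fun a b => C.D lam α ω (f lam) (k, a) (l, b) := by
  ext ω a b
  simp [slice1, C.ind_eq_sum, Matrix.sum_apply]

theorem tenR2_ind_ind (f : FI n) : tenR2 C.ind (C.ind f) = tenL2 C.ind (C.ind f) := by
  funext α β γ
  ext ⟨k, q, r⟩ ⟨l, q', r'⟩
  change C.ind (slice2 (C.ind f) γ r r') α β (k, q) (l, q')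
    = C.ind (slice1 (C.ind f) α k l) β γ (q, r) (q', r')
  -- both sides become `∑ᶠ λ` of the two sides of the coassociativity axiom for `Δ^λ`
  rw [slice2_ind, slice1_ind, ind_sum_apply, ind_sum_apply]
  · exact finsum_congr fun lam => C.coassoc lam α β γ (f lam) k l q q' r r'
  all_goals
    intro ω lam h
    ext a b
    simp [C.D_eq_zero_of_notMem_supp h]

theorem slice3_tenL2_ind (g : FI2 n n) (β γ : I) (u v : Fin (n β) × Fin (n γ)) :
    slice3 (tenL2 C.ind g) β γ u v
      = ∑ α ∈ C.supp β γ, ∑ i, ∑ j, C.D α β γ (Matrix.single i j 1) u v • slice2 g α i j := by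
  ext α' k l
  simp only [slice3, tenL2, C.ind_eq_sum, Matrix.of_apply, Matrix.sum_apply, Finset.sum_apply]
  refine Finset.sum_congr rfl fun α _ => ?_
  rw [Matrix.map_eq_sum_single (C.toHom α β γ)]
  simp only [Matrix.sum_apply, Matrix.smul_apply, Pi.smul_apply, toHom_apply, smul_eq_mul,
    mul_comm]
  rfl

theorem slice3_tenL2_ind_mem {g : FI2 n n} (hg : Fb1 g) (β γ : I) (u v : Fin (n β) × Fin (n γ)) :
    slice3 (tenL2 C.ind g) β γ u v ∈ Fb n := by
  rw [slice3_tenL2_ind]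
  exact sum_mem fun α _ => sum_mem fun i _ => sum_mem fun j _ =>
    Submodule.smul_mem _ _ (slice2_mem_Fb hg α i j)

theorem ind_fTenR (𝔪 : Fb n →ₗ[ℂ] ℂ) {g : FI2 n n} (hg : Fb1 g) :
    C.ind (fTenR 𝔪 g) = fTenR3 𝔪 (tenL2 C.ind g) := by
  ext β γ u v
  have hmem : ∀ α i j, slice2 g α i j ∈ Fb n := slice2_mem_Fb hg
  change C.ind (fTenR 𝔪 g) β γ u v = apF 𝔪 (slice3 (tenL2 C.ind g) β γ u v)
  rw [slice3_tenL2_ind, C.ind_eq_sum, Matrix.sum_apply,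
    apF_sum 𝔪 fun α _ => sum_mem fun i _ => sum_mem fun j _ => Submodule.smul_mem _ _ (hmem α i j)]
  refine Finset.sum_congr rfl fun α _ => ?_
  rw [Matrix.map_eq_sum_single (C.toHom α β γ), Matrix.sum_apply,
    apF_sum 𝔪 fun i _ => sum_mem fun j _ => Submodule.smul_mem _ _ (hmem α i j)]
  refine Finset.sum_congr rfl fun i _ => ?_
  rw [Matrix.sum_apply, apF_sum 𝔪 fun j _ => Submodule.smul_mem _ _ (hmem α i j)]
  refine Finset.sum_congr rfl fun j _ => ?_
  rw [apF_smul 𝔪 _ (hmem α i j), Matrix.smul_apply, smul_eq_mul, mul_comm, toHom_apply]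
  rfl


end Comul

section Invariance

variable {I : Type*} {n : I → ℕ} {C : Comul n} {𝔪 : Fb n →ₗ[ℂ] ℂ}

theorem IsRIMean.apF_slice2_ind (h𝔪 : IsRIMean C 𝔪) {h : FI n} (hh : h ∈ Fb n) (β : I)
    (i j : Fin (n β)) : apF 𝔪 (slice2 (C.ind h) β i j) = apF 𝔪 h * (1 : Mat (n β)) i j := by
  simpa [fTenR] using congrFun (congrFun (congrFun (h𝔪.2 h hh) β) i) j

end Invariance

section AdditiveEquation

variable {I : Type*} {n : I → ℕ} {C : Comul n} {f : FI n} {g : FI2 n n}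

theorem slice1_eq_slice1_ind_sub (hgdef : ∀ β γ, g β γ = C.ind f β γ - f β ⊗ₖ (1 : Mat (n γ)))
    (α : I) (k l : Fin (n α)) : slice1 g α k l = slice1 (C.ind f) α k l - f α k l • 1 := by
  ext ω i j
  simp [slice1, hgdef, Matrix.one_apply]

theorem slice2_ind_eq_slice2_add (hgdef : ∀ β γ, g β γ = C.ind f β γ - f β ⊗ₖ (1 : Mat (n γ)))
    (γ : I) (r r' : Fin (n γ)) :
    slice2 (C.ind f) γ r r' = slice2 g γ r r' + (1 : Mat (n γ)) r r' • f := by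
  ext ω i j
  simp [slice2, hgdef, mul_comm]

theorem slice3_tenL2_ind_eq (hgdef : ∀ β γ, g β γ = C.ind f β γ - f β ⊗ₖ (1 : Mat (n γ)))
    (β γ : I) (q q' : Fin (n β)) (r r' : Fin (n γ)) :
    slice3 (tenL2 C.ind g) β γ (q, r) (q', r')
      = slice2 (C.ind (slice2 g γ r r')) β q q' + (1 : Mat (n γ)) r r' • slice2 g β q q'
        + ((1 : Mat (n β)) q q' * (1 : Mat (n γ)) r r' - C.ind 1 β γ (q, r) (q', r')) • f := by
  ext α k l
  have hcoassoc := congrFun (congrFun (congrFun (congrFun (congrFun (C.tenR2_ind_ind f) α) β) γ)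
    (k, q, r)) (l, q', r')
  change C.ind (slice2 (C.ind f) γ r r') α β (k, q) (l, q')
    = C.ind (slice1 (C.ind f) α k l) β γ (q, r) (q', r') at hcoassoc
  change C.ind (slice1 g α k l) β γ (q, r) (q', r') = _
  rw [slice1_eq_slice1_ind_sub hgdef, C.ind_sub, C.ind_smul, Pi.sub_apply, Pi.sub_apply,
    Matrix.sub_apply, ← hcoassoc, slice2_ind_eq_slice2_add hgdef, C.ind_add, C.ind_smul]
  simp only [Pi.add_apply, Pi.smul_apply, eq_add_of_sub_eq (hgdef α β).symm]
  simp [slice2]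
  ring

theorem fTenR_eq_zero_of_mem_Fb {𝔪 : Fb n →ₗ[ℂ] ℂ} (h𝔪 : IsRIMean C 𝔪)
    (hgdef : ∀ β γ, g β γ = C.ind f β γ - f β ⊗ₖ (1 : Mat (n γ))) (hg : Fb1 g) (hf : f ∈ Fb n) :
    fTenR 𝔪 g = 0 := by
  ext β i j
  have hinv := h𝔪.apF_slice2_ind hf β i j
  rw [slice2_ind_eq_slice2_add hgdef, apF_add 𝔪 (slice2_mem_Fb hg β i j)
    (Submodule.smul_mem _ _ hf), apF_smul 𝔪 _ hf] at hinv
  change apF 𝔪 (slice2 g β i j) = 0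
  linear_combination hinv

end AdditiveEquation

theorem stmt_14_general {I : Type*} (n : I → ℕ) (C : Comul n)
    (𝔪 : Fb n →ₗ[ℂ] ℂ) (h𝔪 : IsRIMean C 𝔪)
    (f : FI n) (g : FI2 n n)
    (hgdef : ∀ β γ : I, g β γ = C.ind f β γ - f β ⊗ₖ (1 : Mat (n γ)))
    (hg : Fb1 g) :
    ∀ β γ : I, C.ind (fTenR 𝔪 g) β γ
      = fTenR 𝔪 g β ⊗ₖ (1 : Mat (n γ)) + (1 : Mat (n β)) ⊗ₖ fTenR 𝔪 g γ := by
  intro β γ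
  by_cases hf : f ∈ Fb n
  · rw [fTenR_eq_zero_of_mem_Fb h𝔪 hgdef hg hf, C.ind_zero]
    simp
  rw [C.ind_fTenR 𝔪 hg]
  ext ⟨q, r⟩ ⟨q', r'⟩
  have hkey := slice3_tenL2_ind_eq hgdef β γ q q' r r'
  have hslβ := slice2_mem_Fb hg β q q'
  have hslγ := slice2_mem_Fb hg γ r r'
  have hA := slice2_mem_Fb (C.fb1_ind hslγ) β q q'
  have ht : (1 : Mat (n β)) q q' * (1 : Mat (n γ)) r r' - C.ind 1 β γ (q, r) (q', r') = 0 := by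
    by_contra ht
    refine hf ((Submodule.smul_mem_iff _ ht).1 ?_)
    rw [eq_sub_of_add_eq' hkey.symm]
    exact sub_mem (C.slice3_tenL2_ind_mem hg β γ _ _) (add_mem hA (Submodule.smul_mem _ _ hslβ))
  change apF 𝔪 (slice3 (tenL2 C.ind g) β γ (q, r) (q', r')) = _
  rw [hkey, ht, zero_smul, add_zero, apF_add 𝔪 hA (Submodule.smul_mem _ _ hslβ),
    apF_smul 𝔪 _ hslβ, h𝔪.apF_slice2_ind hslγ]
  simp [fTenR]
  ring

/-- The function `F = (𝔪 ⊗̃ id)(Δ(f) - f ⊗ 1)` satisfies the noncommutative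
additive functional equation, provided `Δ(f) - f ⊗ 1 ∈ F_{b:1}(𝔾 × 𝔾)`. -/
theorem stmt_14 {I : Type*} (n : I → ℕ) (hn : ∀ γ, 0 < n γ) (C : Comul n)
    (𝔪 : Fb n →ₗ[ℂ] ℂ) (h𝔪 : IsRIMean C 𝔪)
    (f : FI n) (g : FI2 n n)
    (hgdef : ∀ β γ : I, g β γ = C.ind f β γ - f β ⊗ₖ (1 : Mat (n γ)))
    (hg : Fb1 g) :
    ∀ β γ : I, C.ind (fTenR 𝔪 g) β γ
      = fTenR 𝔪 g β ⊗ₖ (1 : Mat (n γ)) + (1 : Mat (n β)) ⊗ₖ fTenR 𝔪 g γ :=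
  stmt_14_general n C 𝔪 h𝔪 f g hgdef hg

end DQSG
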